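/- arXiv:1607.05758 — 2 statements merged into one kernel-verified Lean document; each statement's English description precedes it below -/
import Mathlib

section
/- Let X¹,…,X^{M} be the resampled particles produced by Rubin's SIR mechanism with N intermediate samples from q and target p. Then the X^l are identically distributed, and each X^l has probability density q̃_N(x) = N h_N(x) q(x) with respect to Lebesgue measure; that is, for every Borel set A ⊆ ℝ, P(X^l ∈ A) = ∫_A N h_N(x) q(x) dx. -/
open MeasureTheory ProbabilityTheory Finset Filter Topology

noncomputable section

/-- Importance weight function `w = p / q`. -/
def impWeight (p q : ℝ → ℝ) (x : ℝ) : ℝ := p x / q x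

/-- `h_N(x)`: the conditional expectation of the normalized importance weight of a particle
located at `x`, the `N - 1` other intermediate particles being i.i.d. from `q`. -/
def hFun (p q : ℝ → ℝ) (N : ℕ) (x : ℝ) : ℝ :=
  ∫ y : Fin (N - 1) → ℝ,
    (impWeight p q x / (impWeight p q x + ∑ l, impWeight p q (y l))) * ∏ l, q (y l)

/-- The compound importance function `q̃_N(x) = N h_N(x) q(x)`. -/
def qTilde (p q : ℝ → ℝ) (N : ℕ) (x : ℝ) : ℝ := N * hFun p q N x * q x

section Aux

variable {p q : ℝ → ℝ}

lemma impWeight_nonneg (hp0 : ∀ x, 0 ≤ p x) (hq0 : ∀ x, 0 ≤ q x) (x : ℝ) :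
    0 ≤ impWeight p q x := div_nonneg (hp0 x) (hq0 x)

lemma aux_coord (hpm : Measurable p) (hqm : Measurable q)
    (hp0 : ∀ x, 0 ≤ p x) (hq0 : ∀ x, 0 ≤ q x) (hqi : Integrable q)
    (n : ℕ) (A : Set ℝ) (hA : MeasurableSet A) (i : Fin (n + 1)) :
    Integrable (fun x : Fin (n + 1) → ℝ =>
      (impWeight p q (x i) / ∑ j, impWeight p q (x j)) * A.indicator 1 (x i) * ∏ j, q (x j)) ∧
    ∫ x : Fin (n + 1) → ℝ,
      (impWeight p q (x i) / ∑ j, impWeight p q (x j)) * A.indicator 1 (x i) * ∏ j, q (x j)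
      = ∫ x in A, hFun p q (n + 1) x * q x := by
  have hw := impWeight_nonneg hp0 hq0
  have hwm : Measurable (impWeight p q) := hpm.div hqm
  set e := MeasurableEquiv.piFinSuccAbove (fun _ : Fin (n+1) => ℝ) i with he
  have hmp : MeasurePreserving e volume
      ((volume : Measure ℝ).prod (volume : Measure (Fin n → ℝ))) :=
    measurePreserving_piFinSuccAbove (fun _ => volume) i
  set G : ℝ × (Fin n → ℝ) → ℝ := fun z =>
    (impWeight p q z.1 / (impWeight p q z.1 + ∑ l, impWeight p q (z.2 l))) * A.indicator 1 z.1
      * (q z.1 * ∏ l, q (z.2 l)) with hG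
  -- the integrand equals `G ∘ e`
  have hcomp : (fun x : Fin (n + 1) → ℝ =>
      (impWeight p q (x i) / ∑ j, impWeight p q (x j)) * A.indicator 1 (x i) * ∏ j, q (x j))
      = G ∘ e := by
    funext x
    simp only [Function.comp_apply, hG, he, MeasurableEquiv.piFinSuccAbove_apply,
      Fin.insertNthEquiv_symm_apply, Fin.removeNth]
    try rw [Fin.sum_univ_succAbove (fun j => impWeight p q (x j)) i,
      Fin.prod_univ_succAbove (fun j => q (x j)) i]
    try ring
  -- measurability of G
  have hGm : Measurable G := by
    apply Measurable.mul
    apply Measurable.mul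
    · exact (hwm.comp measurable_fst).div ((hwm.comp measurable_fst).add
        (Finset.measurable_sum _ fun l _ => hwm.comp ((measurable_pi_apply l).comp measurable_snd)))
    · exact (measurable_one.indicator hA).comp measurable_fst
    · exact (hqm.comp measurable_fst).mul
        (Finset.measurable_prod _ fun l _ => hqm.comp ((measurable_pi_apply l).comp measurable_snd))
  -- the first factor lies in [0, 1]
  have hratio : ∀ z : ℝ × (Fin n → ℝ),
      (impWeight p q z.1 / (impWeight p q z.1 + ∑ l, impWeight p q (z.2 l))) * A.indicator 1 z.1
        ∈ Set.Icc (0:ℝ) 1 := by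
    intro z
    have hind0 : (0:ℝ) ≤ A.indicator 1 z.1 := Set.indicator_nonneg (fun _ _ => zero_le_one) _
    have hind1 : A.indicator (1 : ℝ → ℝ) z.1 ≤ 1 := by
      classical
      by_cases h : z.1 ∈ A <;> simp [h]
    have hrat0 : (0:ℝ) ≤ impWeight p q z.1 / (impWeight p q z.1 + ∑ l, impWeight p q (z.2 l)) :=
      div_nonneg (hw _) (add_nonneg (hw _) (Finset.sum_nonneg fun l _ => hw _))
    have hrat1 : impWeight p q z.1 / (impWeight p q z.1 + ∑ l, impWeight p q (z.2 l)) ≤ 1 :=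
      div_le_one_of_le₀ (le_add_of_nonneg_right (Finset.sum_nonneg fun l _ => hw _))
        (add_nonneg (hw _) (Finset.sum_nonneg fun l _ => hw _))
    constructor
    · exact mul_nonneg hrat0 hind0
    · calc _ ≤ 1 * 1 := mul_le_mul hrat1 hind1 hind0 zero_le_one
        _ = 1 := one_mul 1
  -- integrability of G
  have hB : Integrable (fun z : ℝ × (Fin n → ℝ) => q z.1 * ∏ l, q (z.2 l))
      ((volume : Measure ℝ).prod (volume : Measure (Fin n → ℝ))) :=
    hqi.mul_prod (Integrable.fintype_prod fun _ : Fin n => hqi)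
  have hGi : Integrable G ((volume : Measure ℝ).prod (volume : Measure (Fin n → ℝ))) := by
    refine hB.mono' hGm.aestronglyMeasurable (Filter.Eventually.of_forall fun z => ?_)
    have h1 := hratio z
    have hq1 : (0:ℝ) ≤ q z.1 * ∏ l, q (z.2 l) :=
      mul_nonneg (hq0 _) (Finset.prod_nonneg fun l _ => hq0 _)
    rw [hG]
    simp only [Real.norm_eq_abs]
    rw [abs_of_nonneg (mul_nonneg h1.1 hq1)]
    exact mul_le_of_le_one_left hq1 h1.2
  -- integrability of the original integrand
  have hFi : Integrable (fun x : Fin (n + 1) → ℝ =>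
      (impWeight p q (x i) / ∑ j, impWeight p q (x j)) * A.indicator 1 (x i) * ∏ j, q (x j)) := by
    rw [hcomp]
    exact ((hmp.integrable_comp_emb e.measurableEmbedding).2 hGi)
  refine ⟨hFi, ?_⟩
  rw [hcomp]
  have h1 : ∫ x, (G ∘ e) x = ∫ z, G z ∂((volume : Measure ℝ).prod volume) :=
    hmp.integral_comp e.measurableEmbedding G
  rw [h1, integral_prod G hGi]
  -- compute the inner integral
  have hinner : ∀ x : ℝ, ∫ y : Fin n → ℝ, G (x, y)
      = A.indicator (fun x => hFun p q (n + 1) x * q x) x := by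
    intro x
    have : ∀ y : Fin n → ℝ, G (x, y) = (A.indicator 1 x * q x) *
        ((impWeight p q x / (impWeight p q x + ∑ l, impWeight p q (y l))) * ∏ l, q (y l)) := by
      intro y; rw [hG]; ring
    rw [show (fun y : Fin n → ℝ => G (x, y)) = fun y => (A.indicator 1 x * q x) *
        ((impWeight p q x / (impWeight p q x + ∑ l, impWeight p q (y l))) * ∏ l, q (y l))
      from funext this, integral_const_mul]
    have hH : hFun p q (n + 1) x = ∫ y : Fin n → ℝ,
        (impWeight p q x / (impWeight p q x + ∑ l, impWeight p q (y l))) * ∏ l, q (y l) := rfl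
    rw [← hH]
    classical
    by_cases h : x ∈ A <;> simp [h, Set.indicator_of_mem, Set.indicator_of_notMem] <;> ring
  rw [show (fun x : ℝ => ∫ y : Fin n → ℝ, G (x, y))
      = A.indicator (fun x => hFun p q (n + 1) x * q x) from funext hinner,
    integral_indicator hA]

lemma aux_main (hpm : Measurable p) (hqm : Measurable q)
    (hp0 : ∀ x, 0 ≤ p x) (hq0 : ∀ x, 0 ≤ q x) (hqi : Integrable q)
    (n : ℕ) (A : Set ℝ) (hA : MeasurableSet A) :
    ∫ x : Fin (n + 1) → ℝ,
      (∑ i, (impWeight p q (x i) / ∑ j, impWeight p q (x j)) * A.indicator (1 : ℝ → ℝ) (x i))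
        * ∏ j, q (x j)
      = ∫ x in A, qTilde p q (n + 1) x := by
  have hrw : ∀ x : Fin (n + 1) → ℝ,
      (∑ i, (impWeight p q (x i) / ∑ j, impWeight p q (x j)) * A.indicator (1 : ℝ → ℝ) (x i))
        * ∏ j, q (x j)
      = ∑ i, (impWeight p q (x i) / ∑ j, impWeight p q (x j)) * A.indicator 1 (x i)
          * ∏ j, q (x j) := fun x => Finset.sum_mul _ _ _
  rw [show (fun x : Fin (n + 1) → ℝ =>
      (∑ i, (impWeight p q (x i) / ∑ j, impWeight p q (x j)) * A.indicator (1 : ℝ → ℝ) (x i))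
        * ∏ j, q (x j)) = fun x =>
      ∑ i, (impWeight p q (x i) / ∑ j, impWeight p q (x j)) * A.indicator 1 (x i)
          * ∏ j, q (x j) from funext hrw,
    integral_finset_sum Finset.univ
      (fun i _ => (aux_coord hpm hqm hp0 hq0 hqi n A hA i).1)]
  have heach : ∀ i : Fin (n + 1),
      ∫ x : Fin (n + 1) → ℝ,
        (impWeight p q (x i) / ∑ j, impWeight p q (x j)) * A.indicator 1 (x i) * ∏ j, q (x j)
        = ∫ x in A, hFun p q (n + 1) x * q x :=
    fun i => (aux_coord hpm hqm hp0 hq0 hqi n A hA i).2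
  rw [Finset.sum_congr rfl (fun i _ => heach i), Finset.sum_const, Finset.card_univ,
    Fintype.card_fin, nsmul_eq_mul]
  have : ∀ x : ℝ, qTilde p q (n + 1) x = ((n + 1 : ℕ) : ℝ) * (hFun p q (n + 1) x * q x) := by
    intro x; unfold qTilde; push_cast; ring
  rw [show (fun x => qTilde p q (n+1) x) = fun x => ((n + 1 : ℕ) : ℝ) * (hFun p q (n + 1) x * q x)
    from funext this, integral_const_mul]

end Aux

/-- the particles `X^1, …, X^M` produced by Rubin's SIR mechanism
(`X̃^1, …, X̃^N` i.i.d. from `q`, then each `X^l` drawn among the `X̃^i` with probability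
proportional to `w(X̃^i) = p(X̃^i)/q(X̃^i)`) are identically distributed, with common
probability density `q̃_N(x) = N h_N(x) q(x)` w.r.t. Lebesgue measure:
`P(X^l ∈ A) = ∫_A N h_N(x) q(x) dx` for every Borel set `A`. -/
theorem sir_resampled_particles_density
    (Ω : Type) [MeasurableSpace Ω] (μ : Measure Ω) [IsProbabilityMeasure μ]
    (p q : ℝ → ℝ) (hpm : Measurable p) (hqm : Measurable q)
    (hp0 : ∀ x, 0 ≤ p x) (hq0 : ∀ x, 0 ≤ q x)
    (hp1 : ∫ x, p x = 1) (hq1 : ∫ x, q x = 1)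
    (hsupp : ∀ x, 0 < p x → 0 < q x)
    (N M : ℕ) (hN : 1 ≤ N)
    -- the intermediate particles `X̃ = (X̃^1, …, X̃^N)`, i.i.d. from `q`
    (Xt : Ω → Fin N → ℝ) (hXtm : Measurable Xt)
    (hXtlaw : Measure.map Xt μ =
      Measure.pi fun _ : Fin N => volume.withDensity fun x => ENNReal.ofReal (q x))
    -- the resampled particles `X^1, …, X^M`
    (X : Fin M → Ω → ℝ) (hXm : ∀ l, Measurable (X l))
    -- conditionally on `X̃`, each `X^l` equals `X̃^i` with probability `w(X̃^i)/∑_j w(X̃^j)`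
    (hjoint : ∀ (l : Fin M) (A : Set ℝ) (B : Set (Fin N → ℝ)),
      MeasurableSet A → MeasurableSet B →
      μ {ω | X l ω ∈ A ∧ Xt ω ∈ B} =
        ENNReal.ofReal (∫ x in B,
          (∑ i, (impWeight p q (x i) / ∑ j, impWeight p q (x j)) *
            A.indicator (1 : ℝ → ℝ) (x i)) * ∏ j, q (x j))) :
    (∀ k l : Fin M, Measure.map (X k) μ = Measure.map (X l) μ) ∧
    (∀ (l : Fin M) (A : Set ℝ), MeasurableSet A →
      μ (X l ⁻¹' A) = ENNReal.ofReal (∫ x in A, qTilde p q N x)) := by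
  have hqi : Integrable q := by
    by_contra h
    rw [integral_undef h] at hq1
    exact one_ne_zero hq1.symm
  obtain ⟨n, rfl⟩ : ∃ n, N = n + 1 := ⟨N - 1, (Nat.succ_pred_eq_of_pos hN).symm⟩
  have key : ∀ (l : Fin M) (A : Set ℝ), MeasurableSet A →
      μ (X l ⁻¹' A) = ENNReal.ofReal (∫ x in A, qTilde p q (n + 1) x) := by
    intro l A hA
    have h := hjoint l A Set.univ hA MeasurableSet.univ
    have hset : {ω | X l ω ∈ A ∧ Xt ω ∈ Set.univ} = X l ⁻¹' A := by
      ext ω; simp [Set.mem_preimage]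
    rw [hset] at h
    rw [h, Measure.restrict_univ]
    congr 1
    exact aux_main hpm hqm hp0 hq0 hqi n A hA
  refine ⟨fun k l => ?_, key⟩
  ext s hs
  rw [Measure.map_apply (hXm k) hs, Measure.map_apply (hXm l) hs, key k s hs, key l s hs]
end
end

section
/- Heterogeneous (dynamic) SIR mechanism: let q₁,…,q_N be probability densities on ℝ and p₁,…,p_N be nonnegative integrable functions on ℝ with q_i(x) > 0 whenever p_i(x) > 0 and Σᵢ ∫ p_i > 0. Draw X̃¹,…,X̃ᴺ independently with X̃ⁱ ~ q_i, then draw an index L with P(L = i | X̃¹,…,X̃ᴺ) proportional to (p_i/q_i)(X̃ⁱ), and set X = X̃^L. Then X has probability density q̃_N(x) = Σ_{i=1}^N h_i(x) q_i(x), where h_i(x) = ∫_{ℝ^{N−1}} [(p_i/q_i)(x) / ((p_i/q_i)(x) + Σ_{l≠i} (p_l/q_l)(x_l))] ∏_{l≠i} q_l(x_l) dx_l. -/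
/-!
Split the event `{X̃^L ∈ A}` according to the value of `L`. The piece `{L = i, X̃^i ∈ A}`
has probability `∫_{x_i ∈ A} (w_i(x_i) / ∑_j w_j(x_j)) ∏_l q_l(x_l) dx`. Writing
`ℝ^N = ℝ × ℝ^{N-1}` by splitting off coordinate `i`, the integrand factors as `q_i(x_i)` times
the integrand of `h_i(x_i)`, so Fubini turns this probability into `∫_A h_i q_i`; summing over
`i` gives `q̃_N`.
-/

open MeasureTheory ProbabilityTheory Finset Filter Topology

noncomputable section

/-- Heterogeneous importance weight function `w_i = p_i / q_i`. -/
def wHet {N : ℕ} (p q : Fin N → ℝ → ℝ) (i : Fin N) (x : ℝ) : ℝ := p i x / q i x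

/-- `h_i(x)`: the conditional expectation of the `i`-th normalized importance weight given
that the `i`-th proposed particle equals `x`, the other particles `X̃^l ∼ q_l` (`l ≠ i`)
being drawn independently. -/
def hHet {N : ℕ} (p q : Fin N → ℝ → ℝ) (i : Fin N) (x : ℝ) : ℝ :=
  ∫ y : {l : Fin N // l ≠ i} → ℝ,
    (wHet p q i x / (wHet p q i x + ∑ l : {l : Fin N // l ≠ i}, wHet p q l.1 (y l))) *
      ∏ l : {l : Fin N // l ≠ i}, q l.1 (y l)

/-- The compound (mixture) importance function `q̃_N(x) = ∑_i h_i(x) q_i(x)`. -/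
def qTildeHet {N : ℕ} (p q : Fin N → ℝ → ℝ) (x : ℝ) : ℝ := ∑ i, hHet p q i x * q i x

@[simps! -fullyApplied]
def MeasurableEquiv.piSplitAt {ι : Type*} [DecidableEq ι] (i : ι) (α : ι → Type*)
    [∀ j, MeasurableSpace (α j)] : (∀ j, α j) ≃ᵐ α i × ∀ j : {j // j ≠ i}, α j where
  toEquiv := Equiv.piSplitAt i α
  measurable_toFun :=
    (measurable_pi_apply i).prodMk (measurable_pi_lambda _ fun _ => measurable_pi_apply _)
  measurable_invFun := measurable_pi_iff.2 fun j => by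
    change Measurable fun x : α i × (∀ j : {j // j ≠ i}, α j) =>
      if h : j = i then (h.symm.rec x.1 : α j) else x.2 ⟨j, h⟩
    split_ifs with h
    · subst h
      exact measurable_fst
    · exact (measurable_pi_apply _).comp measurable_snd

section PiSplitAt

variable {ι : Type*} [Fintype ι] [DecidableEq ι] {α : ι → Type*} [∀ j, MeasurableSpace (α j)]
  (μ : ∀ j, Measure (α j)) [∀ j, SigmaFinite (μ j)]

theorem measurePreserving_piSplitAt (i : ι) :
    MeasurePreserving (MeasurableEquiv.piSplitAt i α) (Measure.pi μ)
      ((μ i).prod (Measure.pi fun j : {j // j ≠ i} => μ j)) := by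
  set e := (MeasurableEquiv.piSplitAt i α).symm
  refine MeasurePreserving.symm e ⟨e.measurable, (Measure.pi_eq fun s _ => ?_).symm⟩
  have he : e ⁻¹' Set.univ.pi s = s i ×ˢ Set.univ.pi fun j : {j // j ≠ i} => s j := by
    ext ⟨a, y⟩
    simp only [e, Set.mem_preimage, Set.mem_pi, Set.mem_univ, true_implies,
      MeasurableEquiv.piSplitAt_symm_apply, Set.mem_prod, Subtype.forall]
    refine ⟨fun h => ⟨by simpa using h i, fun j hj => by simpa [hj] using h j⟩,
      fun ⟨ha, hy⟩ j => ?_⟩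
    by_cases hj : j = i
    · subst hj
      simpa using ha
    · simpa [hj] using hy j hj
  rw [e.map_apply, he, Measure.prod_prod, Measure.pi_pi,
    Fintype.prod_eq_mul_prod_subtype_ne _ i]

theorem integral_pi_comp_piSplitAt (i : ι) {E : Type*} [NormedAddCommGroup E] [NormedSpace ℝ E]
    {g : α i × (∀ j : {j // j ≠ i}, α j) → E}
    (hg : Integrable g ((μ i).prod (Measure.pi fun j : {j // j ≠ i} => μ j))) :
    ∫ x, g (x i, fun j => x j) ∂Measure.pi μ =
      ∫ a, ∫ y, g (a, y) ∂Measure.pi (fun j : {j // j ≠ i} => μ j) ∂μ i := by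
  rw [← integral_prod g hg, ← (measurePreserving_piSplitAt μ i).integral_comp' g]
  rfl

end PiSplitAt

theorem measure_apply_index_mem_eq_sum {Ω ι β : Type*} [MeasurableSpace Ω] [Fintype ι]
    [MeasurableSpace ι] [MeasurableSingletonClass ι] [MeasurableSpace β] (μ : Measure Ω)
    {X : Ω → ι → β} (hX : Measurable X) {L : Ω → ι} (hL : Measurable L) {A : Set β}
    (hA : MeasurableSet A) :
    μ {ω | X ω (L ω) ∈ A} = ∑ i, μ {ω | L ω = i ∧ X ω i ∈ A} := by
  have hunion : {ω | X ω (L ω) ∈ A} = ⋃ i, {ω | L ω = i ∧ X ω i ∈ A} := by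
    ext ω
    simp
  have hmeas : ∀ i, MeasurableSet {ω | L ω = i ∧ X ω i ∈ A} := fun i =>
    (hL (measurableSet_singleton i)).inter ((measurable_pi_apply i).comp hX hA)
  rw [hunion, measure_iUnion _ hmeas, tsum_fintype]
  intro i j hij
  exact Set.disjoint_left.mpr fun ω hi hj => hij (hi.1.symm.trans hj.1)

section HetSIR

variable {N : ℕ} {p q : Fin N → ℝ → ℝ}

def hHetIntegrand (p q : Fin N → ℝ → ℝ) (i : Fin N) (z : ℝ × ({l : Fin N // l ≠ i} → ℝ)) :
    ℝ :=
  (wHet p q i z.1 / (wHet p q i z.1 + ∑ l, wHet p q l.1 (z.2 l))) * ∏ l, q l.1 (z.2 l)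

theorem selectionDensity_eq_mul_hHetIntegrand (i : Fin N) (x : Fin N → ℝ) :
    (wHet p q i (x i) / ∑ j, wHet p q j (x j)) * ∏ l, q l (x l) =
      q i (x i) * hHetIntegrand p q i (x i, fun l => x l) := by
  rw [hHetIntegrand, Fintype.sum_eq_add_sum_subtype_ne _ i,
    Fintype.prod_eq_mul_prod_subtype_ne _ i]
  ring

variable (hpm : ∀ i, Measurable (p i)) (hqm : ∀ i, Measurable (q i))
  (hp0 : ∀ i x, 0 ≤ p i x) (hq0 : ∀ i x, 0 ≤ q i x) (hq1 : ∀ i, ∫ x, q i x = 1)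

include hq1 in
theorem integrable_q (i : Fin N) : Integrable (q i) :=
  .of_integral_ne_zero (by rw [hq1 i]; exact one_ne_zero)

include hp0 hq0 in
theorem wHet_nonneg (i : Fin N) (x : ℝ) : 0 ≤ wHet p q i x :=
  div_nonneg (hp0 i x) (hq0 i x)

include hpm hqm in
theorem measurable_wHet (i : Fin N) : Measurable (wHet p q i) :=
  (hpm i).div (hqm i)

include hpm hqm in
theorem measurable_hHetIntegrand (i : Fin N) : Measurable (hHetIntegrand p q i) := by
  have hw := measurable_wHet hpm hqm
  unfold hHetIntegrand
  fun_prop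

include hp0 hq0 in
theorem hHetIntegrand_nonneg (i : Fin N) (z : ℝ × ({l : Fin N // l ≠ i} → ℝ)) :
    0 ≤ hHetIntegrand p q i z := by
  have hw := wHet_nonneg hp0 hq0
  exact mul_nonneg (div_nonneg (hw i z.1) (add_nonneg (hw i z.1)
    (Finset.sum_nonneg fun l _ => hw l.1 (z.2 l))))
    (Finset.prod_nonneg fun l _ => hq0 l.1 (z.2 l))

include hp0 hq0 in
theorem hHetIntegrand_le_prod (i : Fin N) (z : ℝ × ({l : Fin N // l ≠ i} → ℝ)) :
    hHetIntegrand p q i z ≤ ∏ l, q l.1 (z.2 l) := by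
  have hw := wHet_nonneg hp0 hq0
  have hs : 0 ≤ ∑ l : {l : Fin N // l ≠ i}, wHet p q l.1 (z.2 l) :=
    Finset.sum_nonneg fun l _ => hw l.1 (z.2 l)
  exact mul_le_of_le_one_left (Finset.prod_nonneg fun l _ => hq0 l.1 (z.2 l))
    (div_le_one_of_le₀ (le_add_of_nonneg_right hs) (add_nonneg (hw i z.1) hs))

include hpm hqm hp0 hq0 hq1 in
theorem integrable_hHetIntegrand_prod (i : Fin N) {f : ℝ → ℝ} (hf : Integrable f) :
    Integrable (fun z => f z.1 * hHetIntegrand p q i z)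
      ((volume : Measure ℝ).prod (Measure.pi fun _ : {l : Fin N // l ≠ i} => volume)) := by
  refine (hf.norm.mul_prod (Integrable.fintype_prod fun l => integrable_q hq1 l.1)).mono'
    (hf.1.comp_fst.mul (measurable_hHetIntegrand hpm hqm i).aestronglyMeasurable)
    (.of_forall fun z => ?_)
  rw [norm_mul, Real.norm_of_nonneg (hHetIntegrand_nonneg hp0 hq0 i z)]
  exact mul_le_mul_of_nonneg_left (hHetIntegrand_le_prod hp0 hq0 i z) (norm_nonneg _)

include hp0 hq0 in
theorem hHet_nonneg (i : Fin N) (x : ℝ) : 0 ≤ hHet p q i x :=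
  integral_nonneg fun y => hHetIntegrand_nonneg hp0 hq0 i (x, y)

include hpm hqm hp0 hq0 hq1 in
theorem hHet_le_one (i : Fin N) (x : ℝ) : hHet p q i x ≤ 1 := by
  have hprod : Integrable fun y : {l : Fin N // l ≠ i} → ℝ => ∏ l, q l.1 (y l) :=
    Integrable.fintype_prod fun l => integrable_q hq1 l.1
  have hK : Integrable fun y => hHetIntegrand p q i (x, y) :=
    hprod.mono'
      ((measurable_hHetIntegrand hpm hqm i).comp measurable_prodMk_left).aestronglyMeasurable
      (.of_forall fun y => by
        rw [Real.norm_of_nonneg (hHetIntegrand_nonneg hp0 hq0 i (x, y))]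
        exact hHetIntegrand_le_prod hp0 hq0 i (x, y))
  calc hHet p q i x ≤ ∫ y : {l : Fin N // l ≠ i} → ℝ, ∏ l, q l.1 (y l) :=
        integral_mono hK hprod fun y => hHetIntegrand_le_prod hp0 hq0 i (x, y)
    _ = ∏ l : {l : Fin N // l ≠ i}, ∫ x, q l.1 x := by
        rw [volume_pi, integral_fintype_prod_eq_prod]
    _ = 1 := Finset.prod_eq_one fun l _ => hq1 l.1

include hpm hqm in
theorem measurable_hHet (i : Fin N) : Measurable (hHet p q i) :=
  (measurable_hHetIntegrand hpm hqm i).stronglyMeasurable.integral_prod_right'.measurable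

include hpm hqm hp0 hq0 hq1 in
theorem integrable_hHet_mul (i : Fin N) : Integrable fun x => hHet p q i x * q i x :=
  (integrable_q hq1 i).mono' ((measurable_hHet hpm hqm i).mul (hqm i)).aestronglyMeasurable
    (.of_forall fun x => by
      rw [Real.norm_of_nonneg (mul_nonneg (hHet_nonneg hp0 hq0 i x) (hq0 i x))]
      exact mul_le_of_le_one_left (hq0 i x) (hHet_le_one hpm hqm hp0 hq0 hq1 i x))

include hpm hqm hp0 hq0 hq1 in
theorem setIntegral_eval_mem_selectionDensity (i : Fin N) {A : Set ℝ} (hA : MeasurableSet A) :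
    ∫ x in {x : Fin N → ℝ | x i ∈ A},
        (wHet p q i (x i) / ∑ j, wHet p q j (x j)) * ∏ l, q l (x l) =
      ∫ x in A, hHet p q i x * q i x := by
  have hpoint : ∀ x : Fin N → ℝ, {x : Fin N → ℝ | x i ∈ A}.indicator
      (fun x => (wHet p q i (x i) / ∑ j, wHet p q j (x j)) * ∏ l, q l (x l)) x =
      A.indicator (q i) (x i) * hHetIntegrand p q i (x i, fun l => x l) := by
    intro x
    by_cases hx : x i ∈ A
    · simp [Set.indicator, hx, selectionDensity_eq_mul_hHetIntegrand]
    · simp [Set.indicator, hx]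
  have hB : MeasurableSet {x : Fin N → ℝ | x i ∈ A} := measurable_pi_apply i hA
  rw [← integral_indicator hB, ← integral_indicator hA]
  simp only [hpoint, Set.indicator_mul_right]
  refine (integral_pi_comp_piSplitAt (α := fun _ => ℝ) (fun _ => volume) i
    (integrable_hHetIntegrand_prod hpm hqm hp0 hq0 hq1 i
      ((integrable_q hq1 i).indicator hA))).trans
    (integral_congr_ae (.of_forall fun x => ?_))
  dsimp only
  rw [integral_const_mul, mul_comm]
  rfl

end HetSIR

theorem het_sir_output_density_general
    (Ω : Type) [MeasurableSpace Ω] (μ : Measure Ω)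
    (N : ℕ) (p q : Fin N → ℝ → ℝ)
    (hpm : ∀ i, Measurable (p i)) (hqm : ∀ i, Measurable (q i))
    (hp0 : ∀ i x, 0 ≤ p i x) (hq0 : ∀ i x, 0 ≤ q i x)
    (hq1 : ∀ i, ∫ x, q i x = 1)
    -- the proposed particles `X̃ = (X̃^1, …, X̃^N)`, independent with `X̃^i ∼ q_i`
    (Xt : Ω → Fin N → ℝ) (hXtm : Measurable Xt)
    -- the selection index `L`, with `P(L = i | X̃) = w_i(X̃^i)/∑_j w_j(X̃^j)`
    (L : Ω → Fin N) (hLm : Measurable L)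
    (hjoint : ∀ (i : Fin N) (B : Set (Fin N → ℝ)), MeasurableSet B →
      μ {ω | L ω = i ∧ Xt ω ∈ B} =
        ENNReal.ofReal (∫ x in B,
          (wHet p q i (x i) / ∑ j, wHet p q j (x j)) * ∏ l, q l (x l))) :
    -- the output `X = X̃^L` has density `q̃_N`
    ∀ A : Set ℝ, MeasurableSet A →
      μ {ω | Xt ω (L ω) ∈ A} = ENNReal.ofReal (∫ x in A, qTildeHet p q x) := by
  intro A hA
  have hterm : ∀ i, μ {ω | L ω = i ∧ Xt ω i ∈ A} =
      ENNReal.ofReal (∫ x in A, hHet p q i x * q i x) := fun i => by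
    rw [← setIntegral_eval_mem_selectionDensity hpm hqm hp0 hq0 hq1 i hA]
    exact hjoint i _ (measurable_pi_apply i hA)
  rw [measure_apply_index_mem_eq_sum μ hXtm hLm hA, Finset.sum_congr rfl fun i _ => hterm i,
    ← ENNReal.ofReal_sum_of_nonneg fun i _ => setIntegral_nonneg hA fun x _ =>
      mul_nonneg (hHet_nonneg hp0 hq0 i x) (hq0 i x),
    ← integral_finsetSum _ fun i _ => (integrable_hHet_mul hpm hqm hp0 hq0 hq1 i).integrableOn]
  rfl

/-- heterogeneous (dynamic) SIR mechanism.  With `X̃^1, …, X̃^N` independent,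
`X̃^i ∼ q_i`, and an index `L` drawn with `P(L = i | X̃) ∝ (p_i/q_i)(X̃^i)`, the output
`X = X̃^L` has probability density `q̃_N(x) = ∑_i h_i(x) q_i(x)` w.r.t. Lebesgue measure. -/
theorem het_sir_output_density
    (Ω : Type) [MeasurableSpace Ω] (μ : Measure Ω) [IsProbabilityMeasure μ]
    (N : ℕ) (p q : Fin N → ℝ → ℝ)
    (hpm : ∀ i, Measurable (p i)) (hqm : ∀ i, Measurable (q i))
    (hp0 : ∀ i x, 0 ≤ p i x) (hq0 : ∀ i x, 0 ≤ q i x)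
    (hpint : ∀ i, Integrable (p i)) (hq1 : ∀ i, ∫ x, q i x = 1)
    (hsupp : ∀ i x, 0 < p i x → 0 < q i x)
    (hppos : 0 < ∑ i, ∫ x, p i x)
    -- the proposed particles `X̃ = (X̃^1, …, X̃^N)`, independent with `X̃^i ∼ q_i`
    (Xt : Ω → Fin N → ℝ) (hXtm : Measurable Xt)
    (hXtlaw : Measure.map Xt μ =
      Measure.pi fun i => volume.withDensity fun x => ENNReal.ofReal (q i x))
    -- the selection index `L`, with `P(L = i | X̃) = w_i(X̃^i)/∑_j w_j(X̃^j)`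
    (L : Ω → Fin N) (hLm : Measurable L)
    (hjoint : ∀ (i : Fin N) (B : Set (Fin N → ℝ)), MeasurableSet B →
      μ {ω | L ω = i ∧ Xt ω ∈ B} =
        ENNReal.ofReal (∫ x in B,
          (wHet p q i (x i) / ∑ j, wHet p q j (x j)) * ∏ l, q l (x l))) :
    -- the output `X = X̃^L` has density `q̃_N`
    ∀ A : Set ℝ, MeasurableSet A →
      μ {ω | Xt ω (L ω) ∈ A} = ENNReal.ofReal (∫ x in A, qTildeHet p q x) :=
  het_sir_output_density_general Ω μ N p q hpm hqm hp0 hq0 hq1 Xt hXtm L hLm hjoint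
end
end
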